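/- arXiv:2411.10712 — 4 statements merged into one kernel-verified Lean document; each statement's English description precedes it below -/
import Mathlib

section
/- Let λ₂ ≤ λ₃ ≤ λ₄ ≤ λ₅ be nonnegative reals with λ₂+λ₃+λ₄+λ₅ = 3/2 and λ₂²+λ₃²+λ₄²+λ₅² = 3/4. Then Σ_{α=3}^{5} (1/2 − λ_α)² λ_α ≤ λ₂(1 − λ₂)(3/2 − λ₂). -/
/-!
Write `s`, `q` for the first two power sums of `λ₃, λ₄, λ₅`; the constraints fix them as
`s = 3/2 - λ₂` and `q = 3/4 - λ₂²`. By Newton's identities the left-hand side depends on the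
triple only through `s`, `q` and the product `λ₃λ₄λ₅`, and increases with the product.
Bounding the product by AM-GM, `27 λ₃λ₄λ₅ ≤ s³`, leaves a cubic inequality in `λ₂` alone, which
holds on `0 ≤ λ₂ ≤ 3/8` (the smallest of four numbers with sum `3/2` is at most `3/8`).
-/

lemma twentySeven_mul_mul_le_add_add_pow_three {a b c : ℝ} (ha : 0 ≤ a) (hb : 0 ≤ b)
    (hc : 0 ≤ c) : 27 * (a * b * c) ≤ (a + b + c) ^ 3 := by
  nlinarith [mul_nonneg ha (sq_nonneg (b - c)), mul_nonneg hb (sq_nonneg (a - c)),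
    mul_nonneg hc (sq_nonneg (a - b))]

lemma sum_half_sub_sq_mul_eq (x y z : ℝ) :
    (1 / 2 - x) ^ 2 * x + (1 / 2 - y) ^ 2 * y + (1 / 2 - z) ^ 2 * z
      = (x + y + z) / 4 - (x ^ 2 + y ^ 2 + z ^ 2)
        + (3 * (x + y + z) * (x ^ 2 + y ^ 2 + z ^ 2) - (x + y + z) ^ 3) / 2
        + 3 * (x * y * z) := by
  ring

lemma sum_half_sub_sq_mul_le {x y z s q : ℝ} (hx : 0 ≤ x) (hy : 0 ≤ y) (hz : 0 ≤ z)
    (hs : x + y + z = s) (hq : x ^ 2 + y ^ 2 + z ^ 2 = q) :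
    (1 / 2 - x) ^ 2 * x + (1 / 2 - y) ^ 2 * y + (1 / 2 - z) ^ 2 * z
      ≤ s / 4 - q + (3 * s * q - s ^ 3) / 2 + s ^ 3 / 9 := by
  have hamgm := twentySeven_mul_mul_le_add_add_pow_three hx hy hz
  rw [sum_half_sub_sq_mul_eq, hs, hq]
  rw [hs] at hamgm
  linarith

lemma cubic_le_of_le_three_eighths {t : ℝ} (h0 : 0 ≤ t) (h1 : t ≤ 3 / 8) :
    (3 / 2 - t) / 4 - (3 / 4 - t ^ 2)
        + (3 * (3 / 2 - t) * (3 / 4 - t ^ 2) - (3 / 2 - t) ^ 3) / 2 + (3 / 2 - t) ^ 3 / 9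
      ≤ t * (1 - t) * (3 / 2 - t) := by
  -- the difference of the two sides is `t / 4 + t ^ 2 / 2 - 8 * t ^ 3 / 9`
  nlinarith [mul_nonneg (sq_nonneg t) (sub_nonneg.2 h1), sq_nonneg t]

/-- Σ_{α=3}^{5} (1/2 − λ_α)² λ_α ≤ λ₂(1 − λ₂)(3/2 − λ₂). -/
theorem stmt2 (l2 l3 l4 l5 : ℝ)
    (h2 : 0 ≤ l2) (h23 : l2 ≤ l3) (h34 : l3 ≤ l4) (h45 : l4 ≤ l5)
    (hsum : l2 + l3 + l4 + l5 = 3 / 2)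
    (hsq : l2 ^ 2 + l3 ^ 2 + l4 ^ 2 + l5 ^ 2 = 3 / 4) :
    (1 / 2 - l3) ^ 2 * l3 + (1 / 2 - l4) ^ 2 * l4 + (1 / 2 - l5) ^ 2 * l5
      ≤ l2 * (1 - l2) * (3 / 2 - l2) := by
  have h3 : 0 ≤ l3 := h2.trans h23
  have h4 : 0 ≤ l4 := h3.trans h34
  have h5 : 0 ≤ l5 := h4.trans h45
  have hl2 : l2 ≤ 3 / 8 := by linarith
  calc _ ≤ _ := sum_half_sub_sq_mul_le h3 h4 h5 (s := 3 / 2 - l2) (q := 3 / 4 - l2 ^ 2)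
          (by linarith) (by linarith)
    _ ≤ _ := cubic_le_of_le_three_eighths h2 hl2
end

section
/- Let λ₂ ≤ λ₃ ≤ λ₄ ≤ λ₅ be nonnegative reals with λ₂+λ₃+λ₄+λ₅ = 3/2 and λ₂²+λ₃²+λ₄²+λ₅² = 3/4. Then Σ_{α=3}^{5} (1/2 − λ_α)² λ_α² ≤ λ₂(1 − λ₂)(3/4 − λ₂²). -/
/-!
Write `t = λ₂` and `z = λ₅ - 1/2`. The two power-sum constraints determine the first four power
sums of `λ₃, λ₄`, so the claim becomes an inequality between polynomials in `t` and `z`, namely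
`(3 - 4t) f(z) ≤ 2t⁴ - 3t³ + t²/2 + t/2` with `f(z) = z³ + t z² + (t² - t/2) z`, and the only
information left from `λ₃, λ₄` is `(λ₃ - λ₄)² ≥ 0`, i.e. `(3z + t)² ≤ 6t - 8t²`.
On that interval of `z` the cubic `f` is bounded by its value at the local maximum
`u = -(2t + R)/6`, `R = √(6t - 8t²)`, and comparing that value with the right-hand side is a
one-variable inequality on `0 ≤ t ≤ 3/4`, settled by squaring away `R`.
-/

lemma cubic_le_of_deriv_eq_zero {b c u z : ℝ} (hu : 3 * u ^ 2 + 2 * b * u + c = 0)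
    (hz : z ≤ -b - 2 * u) :
    z ^ 3 + b * z ^ 2 + c * z ≤ u ^ 3 + b * u ^ 2 + c * u := by
  have hdiff : (u ^ 3 + b * u ^ 2 + c * u) - (z ^ 3 + b * z ^ 2 + c * z)
      = (z - u) ^ 2 * (-b - 2 * u - z) := by
    linear_combination (u - z) * hu
  linarith [mul_nonneg (sq_nonneg (z - u)) (sub_nonneg.2 hz)]

section Interval

/- The nonnegativity proofs below expand in the Bernstein basis `tⁱ (3 - 4t)ⁿ⁻ⁱ` of `[0, 3/4]`,
in which both polynomials have nonnegative coefficients. -/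

variable {t : ℝ} (ht : 0 ≤ t) (ht' : t ≤ 3 / 4)
include ht ht'

lemma quartic_nonneg_of_mem_Icc : 0 ≤ t / 2 - 14 / 9 * t ^ 3 + 26 / 27 * t ^ 4 := by
  have hs : 0 ≤ 3 - 4 * t := by linarith
  nlinarith [mul_nonneg ht (pow_nonneg hs 3), mul_nonneg (pow_nonneg ht 2) (pow_nonneg hs 2),
    mul_nonneg (pow_nonneg ht 3) hs, pow_nonneg ht 4]

lemma sextic_le_of_mem_Icc :
    t * (3 - 4 * t) ^ 4 * (6 - 8 * t) ≤ 2916 * (1 / 2 - 14 / 9 * t ^ 2 + 26 / 27 * t ^ 3) ^ 2 := by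
  have hs : 0 ≤ 3 - 4 * t := by linarith
  nlinarith [pow_nonneg hs 6, mul_nonneg ht (pow_nonneg hs 5),
    mul_nonneg (pow_nonneg ht 2) (pow_nonneg hs 4), mul_nonneg (pow_nonneg ht 3) (pow_nonneg hs 3),
    mul_nonneg (pow_nonneg ht 4) (pow_nonneg hs 2), mul_nonneg (pow_nonneg ht 5) hs,
    pow_nonneg ht 6]

lemma mul_sqrt_le_quartic :
    t * (3 - 4 * t) ^ 2 / 54 * √(6 * t - 8 * t ^ 2)
      ≤ t / 2 - 14 / 9 * t ^ 3 + 26 / 27 * t ^ 4 := by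
  refine le_of_pow_le_pow_left₀ two_ne_zero (quartic_nonneg_of_mem_Icc ht ht') ?_
  rw [mul_pow, Real.sq_sqrt (by nlinarith)]
  nlinarith [mul_nonneg (sq_nonneg t) (sub_nonneg.2 (sextic_le_of_mem_Icc ht ht'))]

end Interval

lemma mul_cubic_le_of_sq_le {t z : ℝ} (hc : (3 * z + t) ^ 2 ≤ 6 * t - 8 * t ^ 2) :
    (3 - 4 * t) * (z ^ 3 + t * z ^ 2 + (t ^ 2 - t / 2) * z)
      ≤ 2 * t ^ 4 - 3 * t ^ 3 + t ^ 2 / 2 + t / 2 := by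
  have hX : 0 ≤ 6 * t - 8 * t ^ 2 := (sq_nonneg _).trans hc
  have ht : 0 ≤ t := by nlinarith
  have ht' : t ≤ 3 / 4 := by nlinarith
  set R := √(6 * t - 8 * t ^ 2)
  have hR : R ^ 2 = 6 * t - 8 * t ^ 2 := Real.sq_sqrt hX
  have hzR : 3 * z + t ≤ R := Real.le_sqrt_of_sq_le hc
  have hcrit : 3 * (-(2 * t + R) / 6) ^ 2 + 2 * t * (-(2 * t + R) / 6) + (t ^ 2 - t / 2) = 0 := by
    linear_combination hR / 12
  have hmax := cubic_le_of_deriv_eq_zero hcrit (z := z) (by linarith)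
  have hval : (3 - 4 * t) * ((-(2 * t + R) / 6) ^ 3 + t * (-(2 * t + R) / 6) ^ 2
        + (t ^ 2 - t / 2) * (-(2 * t + R) / 6))
      = 2 * t ^ 4 - 3 * t ^ 3 + t ^ 2 / 2 + t / 2
        - (t / 2 - 14 / 9 * t ^ 3 + 26 / 27 * t ^ 4) + t * (3 - 4 * t) ^ 2 / 54 * R := by
    linear_combination (3 - 4 * t) * (-(2 * t + R) / 18 + t / 9) / 12 * hR
  calc _ ≤ (3 - 4 * t) * ((-(2 * t + R) / 6) ^ 3 + t * (-(2 * t + R) / 6) ^ 2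
          + (t ^ 2 - t / 2) * (-(2 * t + R) / 6)) :=
        mul_le_mul_of_nonneg_left hmax (by linarith)
    _ ≤ _ := by linarith [mul_sqrt_le_quartic ht ht']

theorem stmt3_general (l2 l3 l4 l5 : ℝ)
    (hsum : l2 + l3 + l4 + l5 = 3 / 2)
    (hsq : l2 ^ 2 + l3 ^ 2 + l4 ^ 2 + l5 ^ 2 = 3 / 4) :
    (1 / 2 - l3) ^ 2 * l3 ^ 2 + (1 / 2 - l4) ^ 2 * l4 ^ 2 + (1 / 2 - l5) ^ 2 * l5 ^ 2
      ≤ l2 * (1 - l2) * (3 / 4 - l2 ^ 2) := by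
  obtain rfl : l5 = 3 / 2 - l2 - l3 - l4 := by linarith
  have hc : (3 * (1 - l2 - l3 - l4) + l2) ^ 2 ≤ 6 * l2 - 8 * l2 ^ 2 := by
    nlinarith [sq_nonneg (l3 - l4)]
  have hreduce : l2 * (1 - l2) * (3 / 4 - l2 ^ 2)
      - ((1 / 2 - l3) ^ 2 * l3 ^ 2 + (1 / 2 - l4) ^ 2 * l4 ^ 2
        + (1 / 2 - (3 / 2 - l2 - l3 - l4)) ^ 2 * (3 / 2 - l2 - l3 - l4) ^ 2)
      = (2 * l2 ^ 4 - 3 * l2 ^ 3 + l2 ^ 2 / 2 + l2 / 2)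
        - (3 - 4 * l2) * ((1 - l2 - l3 - l4) ^ 3 + l2 * (1 - l2 - l3 - l4) ^ 2
          + (l2 ^ 2 - l2 / 2) * (1 - l2 - l3 - l4)) := by
    linear_combination ((-l2 ^ 2 - l2 * l3 - l2 * l4 + 2 * l2 - l3 ^ 2 - l3 * l4 + 3 / 2 * l3
      - l4 ^ 2 + 3 / 2 * l4 - 1) - (3 - 4 * l2) * (l2 + l3 + l4 - 1) / 2) * hsq
  linarith [mul_cubic_le_of_sq_le hc]

/-- Σ_{α=3}^{5} (1/2 − λ_α)² λ_α² ≤ λ₂(1 − λ₂)(3/4 − λ₂²). -/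
theorem stmt3 (l2 l3 l4 l5 : ℝ)
    (h2 : 0 ≤ l2) (h23 : l2 ≤ l3) (h34 : l3 ≤ l4) (h45 : l4 ≤ l5)
    (hsum : l2 + l3 + l4 + l5 = 3 / 2)
    (hsq : l2 ^ 2 + l3 ^ 2 + l4 ^ 2 + l5 ^ 2 = 3 / 4) :
    (1 / 2 - l3) ^ 2 * l3 ^ 2 + (1 / 2 - l4) ^ 2 * l4 ^ 2 + (1 / 2 - l5) ^ 2 * l5 ^ 2
      ≤ l2 * (1 - l2) * (3 / 4 - l2 ^ 2) :=
  stmt3_general l2 l3 l4 l5 hsum hsq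
end

section
/- Let λ₂ ≤ λ₃ ≤ λ₄ ≤ λ₅ be nonnegative reals with λ₂+λ₃+λ₄+λ₅ = 3/2 and λ₂²+λ₃²+λ₄²+λ₅² = 3/4. Then −2 Σ_{α=2}^{5} λ_α³ + 3/4 = −(3/2)λ₂ + 6λ₂² − 6λ₂³ − 6(λ₃−1/2)(λ₄−1/2)(λ₅−1/2), and consequently −2 Σ_{α=2}^{5} λ_α³ + 3/4 ≤ −(3/2)λ₂ + 6λ₂² − 6λ₂³ + 6λ₂^{3/2}. -/
/-!
Shifting by `1/2`, the two constraints say that the deviations `λ_α - 1/2` have squares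
summing to `1/4`; the identity is then a polynomial consequence of the constraints.
Dropping the other three squares bounds each `(λ_α - 1/2)^2` by `λ₂ - λ₂² ≤ λ₂`, so each
`|λ_α - 1/2|` is at most `√λ₂` and the triple product at most `λ₂^{3/2}` in absolute value.
-/

lemma sum_sq_sub_half_eq {a b c d : ℝ} (hsum : a + b + c + d = 3 / 2)
    (hsq : a ^ 2 + b ^ 2 + c ^ 2 + d ^ 2 = 3 / 4) :
    (a - 1 / 2) ^ 2 + (b - 1 / 2) ^ 2 + (c - 1 / 2) ^ 2 + (d - 1 / 2) ^ 2 = 1 / 4 := by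
  linear_combination hsq - hsum

lemma neg_two_mul_sum_cube_add_eq {a b c d : ℝ} (hsum : a + b + c + d = 3 / 2)
    (hsq : a ^ 2 + b ^ 2 + c ^ 2 + d ^ 2 = 3 / 4) :
    -2 * (a ^ 3 + b ^ 3 + c ^ 3 + d ^ 3) + 3 / 4
      = -(3 / 2) * a + 6 * a ^ 2 - 6 * a ^ 3
        - 6 * (b - 1 / 2) * (c - 1 / 2) * (d - 1 / 2) := by
  linear_combination (3 / 2 - 3 / 2 * a + a ^ 2 - a * b - a * c - a * d - 2 * b ^ 2 + 2 * b * c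
    + 2 * b * d - 2 * c ^ 2 + 2 * c * d - 2 * d ^ 2) * hsum + (-3 + 3 * a) * hsq

lemma sq_le_of_sq_sub_half_add_eq {a x y z : ℝ}
    (h : (a - 1 / 2) ^ 2 + x ^ 2 + y ^ 2 + z ^ 2 = 1 / 4) : x ^ 2 ≤ a := by
  nlinarith [sq_nonneg a, sq_nonneg y, sq_nonneg z]

lemma abs_mul_mul_le_sqrt_pow_three {x y z s : ℝ} (hx : x ^ 2 ≤ s) (hy : y ^ 2 ≤ s)
    (hz : z ^ 2 ≤ s) : |x * y * z| ≤ √s ^ 3 := by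
  rw [abs_mul, abs_mul, pow_three, ← mul_assoc]
  gcongr <;> exact Real.abs_le_sqrt ‹_›

theorem stmt6_general (l2 l3 l4 l5 : ℝ)
    (hsum : l2 + l3 + l4 + l5 = 3 / 2)
    (hsq : l2 ^ 2 + l3 ^ 2 + l4 ^ 2 + l5 ^ 2 = 3 / 4) :
    (-2 * (l2 ^ 3 + l3 ^ 3 + l4 ^ 3 + l5 ^ 3) + 3 / 4
        = -(3 / 2) * l2 + 6 * l2 ^ 2 - 6 * l2 ^ 3
          - 6 * (l3 - 1 / 2) * (l4 - 1 / 2) * (l5 - 1 / 2)) ∧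
    -2 * (l2 ^ 3 + l3 ^ 3 + l4 ^ 3 + l5 ^ 3) + 3 / 4
        ≤ -(3 / 2) * l2 + 6 * l2 ^ 2 - 6 * l2 ^ 3 + 6 * l2 ^ ((3 : ℝ) / 2) := by
  have hid := neg_two_mul_sum_cube_add_eq hsum hsq
  refine ⟨hid, ?_⟩
  have hdev := sum_sq_sub_half_eq hsum hsq
  have h3 : (l3 - 1 / 2) ^ 2 ≤ l2 := sq_le_of_sq_sub_half_add_eq hdev
  have h4 : (l4 - 1 / 2) ^ 2 ≤ l2 :=
    sq_le_of_sq_sub_half_add_eq (y := l3 - 1 / 2) (z := l5 - 1 / 2) (by linarith)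
  have h5 : (l5 - 1 / 2) ^ 2 ≤ l2 :=
    sq_le_of_sq_sub_half_add_eq (y := l3 - 1 / 2) (z := l4 - 1 / 2) (by linarith)
  have hprod := abs_mul_mul_le_sqrt_pow_three h3 h4 h5
  have h2 : 0 ≤ l2 := (sq_nonneg _).trans h3
  rw [Real.rpow_div_two_eq_sqrt 3 h2, Real.rpow_ofNat, hid]
  linarith [neg_abs_le ((l3 - 1 / 2) * (l4 - 1 / 2) * (l5 - 1 / 2))]

/-- −2 Σ_{α=2}^{5} λ_α³ + 3/4
= −(3/2)λ₂ + 6λ₂² − 6λ₂³ − 6(λ₃−1/2)(λ₄−1/2)(λ₅−1/2),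
and consequently ≤ −(3/2)λ₂ + 6λ₂² − 6λ₂³ + 6λ₂^{3/2}. -/
theorem stmt6 (l2 l3 l4 l5 : ℝ)
    (h2 : 0 ≤ l2) (h23 : l2 ≤ l3) (h34 : l3 ≤ l4) (h45 : l4 ≤ l5)
    (hsum : l2 + l3 + l4 + l5 = 3 / 2)
    (hsq : l2 ^ 2 + l3 ^ 2 + l4 ^ 2 + l5 ^ 2 = 3 / 4) :
    (-2 * (l2 ^ 3 + l3 ^ 3 + l4 ^ 3 + l5 ^ 3) + 3 / 4
        = -(3 / 2) * l2 + 6 * l2 ^ 2 - 6 * l2 ^ 3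
          - 6 * (l3 - 1 / 2) * (l4 - 1 / 2) * (l5 - 1 / 2)) ∧
    -2 * (l2 ^ 3 + l3 ^ 3 + l4 ^ 3 + l5 ^ 3) + 3 / 4
        ≤ -(3 / 2) * l2 + 6 * l2 ^ 2 - 6 * l2 ^ 3 + 6 * l2 ^ ((3 : ℝ) / 2) :=
  stmt6_general l2 l3 l4 l5 hsum hsq
end

section
/- Let λ₂ ≤ λ₃ ≤ λ₄ ≤ λ₅ be nonnegative reals with λ₂+λ₃+λ₄+λ₅ = 3/2 and λ₂²+λ₃²+λ₄²+λ₅² = 3/4. Then Σ_{α=2}^{5} λ_α²(1/2−λ_α)² ≤ λ₂ [ λ₂(1/2−λ₂)² + (1−λ₂)(3/4−λ₂²) ]. -/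
/-! Put `μ_α = 1/2 - λ_α`. The two constraints say exactly that `∑ μ_α² = 1/4`, while
`λ₂(1 - λ₂) = 1/4 - μ₂²`; hence `μ_α² ≤ λ₂(1 - λ₂)` for every `α ≠ 2`, as the remaining
squares are nonnegative. Multiplying by `λ_α²` and summing over `α ≠ 2` gives the bound. -/

open Finset

variable {ι : Type*} [DecidableEq ι] {s : Finset ι} {f : ι → ℝ}

theorem half_sub_sq_le_mul_one_sub (h : ∑ k ∈ s, (1 / 2 - f k) ^ 2 = 1 / 4) {i j : ι}
    (hi : i ∈ s) (hj : j ∈ s) (hij : i ≠ j) : (1 / 2 - f j) ^ 2 ≤ f i * (1 - f i) := by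
  have hpair : (1 / 2 - f i) ^ 2 + (1 / 2 - f j) ^ 2 ≤ 1 / 4 := by
    rw [← sum_pair (f := fun k => (1 / 2 - f k) ^ 2) hij, ← h]
    exact sum_le_sum_of_subset_of_nonneg (insert_subset hi (singleton_subset_iff.2 hj))
      fun k _ _ => sq_nonneg _
  linarith [show f i * (1 - f i) = 1 / 4 - (1 / 2 - f i) ^ 2 by ring]

theorem sum_sq_mul_half_sub_sq_le (h : ∑ k ∈ s, (1 / 2 - f k) ^ 2 = 1 / 4) {i : ι}
    (hi : i ∈ s) :
    ∑ k ∈ s, f k ^ 2 * (1 / 2 - f k) ^ 2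
      ≤ f i * (f i * (1 / 2 - f i) ^ 2 + (1 - f i) * ∑ k ∈ s.erase i, f k ^ 2) := by
  rw [← add_sum_erase s _ hi]
  calc f i ^ 2 * (1 / 2 - f i) ^ 2 + ∑ k ∈ s.erase i, f k ^ 2 * (1 / 2 - f k) ^ 2
      ≤ f i ^ 2 * (1 / 2 - f i) ^ 2 + ∑ k ∈ s.erase i, f k ^ 2 * (f i * (1 - f i)) := by
        gcongr with k hk
        exact half_sub_sq_le_mul_one_sub h hi (mem_of_mem_erase hk) (ne_of_mem_erase hk).symm
    _ = f i * (f i * (1 / 2 - f i) ^ 2 + (1 - f i) * ∑ k ∈ s.erase i, f k ^ 2) := by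
        rw [← sum_mul]
        ring

theorem stmt8_general (l2 l3 l4 l5 : ℝ)
    (hsum : l2 + l3 + l4 + l5 = 3 / 2)
    (hsq : l2 ^ 2 + l3 ^ 2 + l4 ^ 2 + l5 ^ 2 = 3 / 4) :
    l2 ^ 2 * (1 / 2 - l2) ^ 2 + l3 ^ 2 * (1 / 2 - l3) ^ 2
      + l4 ^ 2 * (1 / 2 - l4) ^ 2 + l5 ^ 2 * (1 / 2 - l5) ^ 2
    ≤ l2 * (l2 * (1 / 2 - l2) ^ 2 + (1 - l2) * (3 / 4 - l2 ^ 2)) := by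
  set f : Fin 4 → ℝ := ![l2, l3, l4, l5]
  have hf : ∑ k, (1 / 2 - f k) ^ 2 = 1 / 4 := by
    simp only [f, Fin.sum_univ_four, Matrix.cons_val_zero, Matrix.cons_val_one, Matrix.cons_val]
    linear_combination hsq - hsum
  have hrest : ∑ k ∈ univ.erase 0, f k ^ 2 = 3 / 4 - l2 ^ 2 := by
    rw [sum_erase_eq_sub (mem_univ 0)]
    simp only [f, Fin.sum_univ_four, Matrix.cons_val_zero, Matrix.cons_val_one, Matrix.cons_val]
    linear_combination hsq
  have key := sum_sq_mul_half_sub_sq_le hf (mem_univ 0)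
  rw [hrest] at key
  simpa only [f, Fin.sum_univ_four, Matrix.cons_val_zero, Matrix.cons_val_one, Matrix.cons_val]
    using key

/-- Σ_{α=2}^{5} λ_α²(1/2−λ_α)² ≤ λ₂[λ₂(1/2−λ₂)² + (1−λ₂)(3/4−λ₂²)]. -/
theorem stmt8 (l2 l3 l4 l5 : ℝ)
    (h2 : 0 ≤ l2) (h23 : l2 ≤ l3) (h34 : l3 ≤ l4) (h45 : l4 ≤ l5)
    (hsum : l2 + l3 + l4 + l5 = 3 / 2)
    (hsq : l2 ^ 2 + l3 ^ 2 + l4 ^ 2 + l5 ^ 2 = 3 / 4) :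
    l2 ^ 2 * (1 / 2 - l2) ^ 2 + l3 ^ 2 * (1 / 2 - l3) ^ 2
      + l4 ^ 2 * (1 / 2 - l4) ^ 2 + l5 ^ 2 * (1 / 2 - l5) ^ 2
    ≤ l2 * (l2 * (1 / 2 - l2) ^ 2 + (1 - l2) * (3 / 4 - l2 ^ 2)) :=
  stmt8_general l2 l3 l4 l5 hsum hsq
end
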